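/- arXiv:2208.01388 — 5 statements merged into one kernel-verified Lean document; each statement's English description precedes it below -/
import Mathlib

section
/- Let V be a finite-dimensional real inner product space, and for a submodule U of V let r_U : V ≃ₗᵢ[ℝ] V denote the reflection across U. Then for all submodules U, T, W of V: Submodule.map r_T (Submodule.map r_U W) = Submodule.map r_{U'} (Submodule.map r_T W), where U' := Submodule.map r_T U. That is, the operation W ▷ U := Submodule.map r_U W on subspaces of V is right self-distributive: (W ▷ U) ▷ T = (W ▷ T) ▷ (U ▷ T). -/
open Submodule

namespace LinearIsometryEquiv

variable {𝕜 E E' : Type*} [RCLike 𝕜] [NormedAddCommGroup E] [NormedAddCommGroup E']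
  [InnerProductSpace 𝕜 E] [InnerProductSpace 𝕜 E'] (f : E ≃ₗᵢ[𝕜] E')
  (K : Submodule 𝕜 E) [K.HasOrthogonalProjection]

theorem comp_reflection :
    (f.toLinearEquiv : E →ₗ[𝕜] E') ∘ₗ (reflection K : E →ₗ[𝕜] E) =
      (reflection (K.map (f.toLinearEquiv : E →ₗ[𝕜] E')) : E' →ₗ[𝕜] E') ∘ₗ
        (f.toLinearEquiv : E →ₗ[𝕜] E') := by
  ext x
  simp [reflection_map_apply]

theorem map_map_reflection (W : Submodule 𝕜 E) :
    (W.map (reflection K : E →ₗ[𝕜] E)).map (f.toLinearEquiv : E →ₗ[𝕜] E') =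
      (W.map (f.toLinearEquiv : E →ₗ[𝕜] E')).map
        (reflection (K.map (f.toLinearEquiv : E →ₗ[𝕜] E')) : E' →ₗ[𝕜] E') := by
  rw [← map_comp, ← map_comp, f.comp_reflection]

end LinearIsometryEquiv

/-- In a finite-dimensional real inner product space `V`, the operation
`W ▷ U := map (Submodule.reflection U) W` on submodules is right self-distributive:
`(W ▷ U) ▷ T = (W ▷ T) ▷ (U ▷ T)`. -/
theorem reflection_map_self_distrib {V : Type*} [NormedAddCommGroup V]
    [InnerProductSpace ℝ V] [FiniteDimensional ℝ V] (U T W : Submodule ℝ V) :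
    Submodule.map (Submodule.reflection T : V →ₗ[ℝ] V) (Submodule.map (Submodule.reflection U : V →ₗ[ℝ] V) W) =
      Submodule.map (Submodule.reflection (Submodule.map (Submodule.reflection T : V →ₗ[ℝ] V) U) : V →ₗ[ℝ] V)
        (Submodule.map (Submodule.reflection T : V →ₗ[ℝ] V) W) :=
  (reflection T).map_map_reflection U W
end

section
/- Let X be a topological space with a quandle operation ▷ (x ▷ x = x; each right translation β_y(x) = x ▷ y is a bijection; (x ▷ y) ▷ z = (x ▷ z) ▷ (y ▷ z)) such that (x, y) ↦ x ▷ y and (x, y) ↦ β_y⁻¹(x) are continuous. Then every path component of X is closed under ▷ and under left division: if x and y lie in the same path component (Joined x y), then x ▷ y and β_y⁻¹(x) also lie in that path component. Hence each path component of X, with the subspace topology and the restricted operation, is a topological subquandle of X. -/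
/-- Let `X` be a topological space with a quandle operation `op` (with left division `d`)
such that `op` and `d` are continuous. Then every path component of `X` is closed under
the operation and under left division: if `x` and `y` lie in the same path component,
then `x ▷ y` and `β_y⁻¹(x)` lie in that same path component. Hence each path component
is a topological subquandle of `X`. -/
theorem pathComponent_closed_under_quandle_op {X : Type*} [TopologicalSpace X]
    (op d : X → X → X)
    (hop : Continuous fun p : X × X => op p.1 p.2)
    (hd : Continuous fun p : X × X => d p.1 p.2)
    (hidem : ∀ x : X, op x x = x)
    (hd₁ : ∀ x y : X, d (op x y) y = x)
    (hd₂ : ∀ x y : X, op (d x y) y = x)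
    (hdist : ∀ x y z : X, op (op x y) z = op (op x z) (op y z)) :
    ∀ x y : X, Joined x y → Joined x (op x y) ∧ Joined x (d x y) := by
  intro x y hxy
  have hcop : Continuous fun z : X => op x z :=
    hop.comp (continuous_const.prodMk continuous_id)
  have hcd : Continuous fun z : X => d x z :=
    hd.comp (continuous_const.prodMk continuous_id)
  have hdxx : d x x = x := by
    have := hd₁ x x
    rwa [hidem] at this
  obtain ⟨γ⟩ := hxy
  exact ⟨⟨(γ.map hcop).cast (hidem x).symm rfl⟩, ⟨(γ.map hcd).cast hdxx.symm rfl⟩⟩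
end

section
/- Let X be a nonempty topological space with a quandle operation ▷ (x ▷ x = x; each right translation β_y(x) = x ▷ y is a bijection; (x ▷ y) ▷ z = (x ▷ z) ▷ (y ▷ z)) which is continuous X × X → X. Assume X is path-connected and indecomposable: for every x, y ∈ X, x and y are related by the equivalence relation generated by the relation a ~ b ⟺ ∃ c, b = a ▷ c. Then the quotient of the free abelian group on X by the subgroup generated by the elements (of a) − (of (a ▷ b)), for all a, b ∈ X, is isomorphic as an additive group to ℤ. (Since X is path-connected, this quotient is exactly the zeroth topological quandle homology group H₀(X).) -/
/-! Indecomposability says that any two points are linked by a chain of steps `a ↦ a ▷ c` and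
their inverses, so every difference `x - y` of points lies in the subgroup `B₀` generated by the
boundaries `a - a ▷ b`. Hence `B₀` is the kernel of the augmentation `C₀(X) → ℤ`, `x ↦ 1`, which
is onto because `X` is nonempty, and `H₀(X) = C₀(X) ⧸ B₀ ≅ ℤ`. -/

namespace FreeAbelianGroup

variable {X : Type*}

def augmentation : FreeAbelianGroup X →+ ℤ :=
  lift fun _ => 1

@[simp]
lemma augmentation_of (x : X) : augmentation (of x) = 1 :=
  lift_apply_of _ _

lemma augmentation_surjective [Nonempty X] : Function.Surjective (augmentation (X := X)) := by
  obtain ⟨x⟩ := ‹Nonempty X›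
  intro n
  exact ⟨n • of x, by simp⟩

lemma sub_augmentation_smul_mem {H : AddSubgroup (FreeAbelianGroup X)}
    (hH : ∀ x y : X, of x - of y ∈ H) (x₀ : X) (z : FreeAbelianGroup X) :
    z - augmentation z • of x₀ ∈ H := by
  induction z using FreeAbelianGroup.induction_on with
  | zero => simp
  | of x => simpa using hH x x₀
  | neg x ih => simpa [sub_eq_add_neg, add_comm] using H.neg_mem ih
  | add z w ihz ihw =>
    convert H.add_mem ihz ihw using 1
    simp only [map_add, add_smul]
    abel

lemma ker_augmentation_le [Nonempty X] {H : AddSubgroup (FreeAbelianGroup X)}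
    (hH : ∀ x y : X, of x - of y ∈ H) : augmentation.ker ≤ H := by
  obtain ⟨x₀⟩ := ‹Nonempty X›
  intro z hz
  simpa [(AddMonoidHom.mem_ker).1 hz] using sub_augmentation_smul_mem hH x₀ z

lemma of_sub_of_mem_closure_of_eqvGen {r : X → X → Prop} {x y : X} (h : Relation.EqvGen r x y) :
    of x - of y ∈ AddSubgroup.closure {z | ∃ a b, r a b ∧ z = of a - of b} := by
  induction h with
  | rel a b hab => exact AddSubgroup.subset_closure ⟨a, b, hab, rfl⟩
  | refl a => simp
  | symm a b _ ih => simpa using neg_mem ih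
  | trans a b c _ _ ihab ihbc => simpa using add_mem ihab ihbc

lemma closure_of_sub_eq_ker_augmentation [Nonempty X] {r : X → X → Prop}
    (hr : ∀ x y, Relation.EqvGen r x y) :
    AddSubgroup.closure {z | ∃ a b, r a b ∧ z = of a - of b} = augmentation.ker := by
  refine le_antisymm ?_ (ker_augmentation_le fun x y => of_sub_of_mem_closure_of_eqvGen (hr x y))
  rw [AddSubgroup.closure_le]
  rintro _ ⟨a, b, -, rfl⟩
  simp

end FreeAbelianGroup

theorem H0_of_pathConnected_indecomposable_general {X : Type*} [Nonempty X]
    (op : X → X → X)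
    (hind : ∀ x y : X, Relation.EqvGen (fun a b : X => ∃ c : X, b = op a c) x y) :
    Nonempty ((FreeAbelianGroup X ⧸ AddSubgroup.closure
      {z : FreeAbelianGroup X | ∃ a b : X,
        z = FreeAbelianGroup.of a - FreeAbelianGroup.of (op a b)}) ≃+ ℤ) := by
  have boundaries : {z : FreeAbelianGroup X | ∃ a b : X,
        z = FreeAbelianGroup.of a - FreeAbelianGroup.of (op a b)} =
      {z | ∃ a b, (∃ c, b = op a c) ∧ z = FreeAbelianGroup.of a - FreeAbelianGroup.of b} := by
    ext z
    constructor
    · rintro ⟨a, c, rfl⟩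
      exact ⟨a, op a c, ⟨c, rfl⟩, rfl⟩
    · rintro ⟨a, _, ⟨c, rfl⟩, rfl⟩
      exact ⟨a, c, rfl⟩
  rw [boundaries, FreeAbelianGroup.closure_of_sub_eq_ker_augmentation hind]
  exact ⟨QuotientAddGroup.quotientKerEquivOfSurjective _
    FreeAbelianGroup.augmentation_surjective⟩

/-- Let `X` be a nonempty topological space with a continuous quandle operation `op`
(idempotent, bijective right translations, right self-distributive). If `X` is
path-connected and indecomposable (any two points are related by the equivalence relation
generated by `a ~ a ▷ c`), then the quotient of the free abelian group on `X` by the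
subgroup generated by all elements `of a - of (a ▷ b)` — which is the zeroth topological
quandle homology group `H₀(X)` — is isomorphic to `ℤ`. -/
theorem H0_of_pathConnected_indecomposable {X : Type*} [TopologicalSpace X] [Nonempty X]
    (op : X → X → X)
    (hcont : Continuous fun p : X × X => op p.1 p.2)
    (hidem : ∀ x : X, op x x = x)
    (hbij : ∀ y : X, Function.Bijective fun x : X => op x y)
    (hdist : ∀ x y z : X, op (op x y) z = op (op x z) (op y z))
    (hpath : PathConnectedSpace X)
    (hind : ∀ x y : X, Relation.EqvGen (fun a b : X => ∃ c : X, b = op a c) x y) :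
    Nonempty ((FreeAbelianGroup X ⧸ AddSubgroup.closure
      {z : FreeAbelianGroup X | ∃ a b : X,
        z = FreeAbelianGroup.of a - FreeAbelianGroup.of (op a b)}) ≃+ ℤ) :=
  H0_of_pathConnected_indecomposable_general op hind
end

section
/- Let X be a topological space with a continuous quandle operation ▷ (x ▷ x = x; each right translation β_y invertible; right self-distributive). Assume every path component of X is indecomposable, i.e., whenever x and y lie in the same path component (Joined x y), x and y are related by the equivalence relation generated by a ~ b ⟺ ∃ c, (Joined a c ∧ b = a ▷ c). Then the quotient of the free abelian group on X by the subgroup generated by the elements (of a) − (of (a ▷ b)), over all pairs a, b with Joined a b, is isomorphic as an additive group to the free abelian group on the set of path components of X (the zeroth homotopy ZerothHomotopy X). (This quotient is exactly H₀(X), so H₀(X) = ⊕_α ℤ_α.) -/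
/-!
The augmentation `of x ↦ [x]` onto the free abelian group on path components kills every
generator `of a - of (a ▷ b)`, because `t ↦ a ▷ γ t` joins `a ▷ a = a` to `a ▷ b`. Conversely,
indecomposability says that the relation `a ~ a ▷ c` generates "lying in the same path
component", so the quotient already identifies any two points of a path component and the
augmentation has an inverse.
-/

open FreeAbelianGroup

namespace FreeAbelianGroup

variable {X : Type*} (r : X → X → Prop)

abbrev relSubgroup : AddSubgroup (FreeAbelianGroup X) :=
  AddSubgroup.closure {z | ∃ a b, r a b ∧ z = of a - of b}

variable {r}

theorem mk_of_eq_of_eqvGen {a b : X} (h : Relation.EqvGen r a b) :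
    (of a : FreeAbelianGroup X ⧸ relSubgroup r) = of b := by
  induction h with
  | rel a b hab =>
    exact QuotientAddGroup.eq_iff_sub_mem.mpr (AddSubgroup.subset_closure ⟨a, b, hab, rfl⟩)
  | refl => rfl
  | symm _ _ _ ih => exact ih.symm
  | trans _ _ _ _ _ ih₁ ih₂ => exact ih₁.trans ih₂

theorem relSubgroup_le_ker_map_mk (s : Setoid X) (hrs : ∀ a b, r a b → s a b) :
    relSubgroup r ≤ (map (Quotient.mk s)).ker := by
  rw [AddSubgroup.closure_le]
  rintro _ ⟨a, b, hab, rfl⟩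
  simp [AddMonoidHom.mem_ker, map_of_apply, Quotient.sound (hrs a b hab)]

def quotientRelSubgroupEquiv (s : Setoid X) (hrs : ∀ a b, r a b → s a b)
    (hsr : ∀ a b, s a b → Relation.EqvGen r a b) :
    (FreeAbelianGroup X ⧸ relSubgroup r) ≃+ FreeAbelianGroup (Quotient s) :=
  AddMonoidHom.toAddEquiv
    (QuotientAddGroup.lift _ (map (Quotient.mk s)) (relSubgroup_le_ker_map_mk s hrs))
    (lift (Quotient.lift (fun x => (of x : FreeAbelianGroup X ⧸ relSubgroup r))
      fun a b h => mk_of_eq_of_eqvGen (hsr a b h)))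
    (by
      refine QuotientAddGroup.addMonoidHom_ext _ (lift_ext _ _ fun x => ?_)
      simp [map_of_apply, lift_apply_of])
    (lift_ext _ _ fun q => by
      induction q using Quotient.ind
      simp [map_of_apply, lift_apply_of])

end FreeAbelianGroup

theorem joined_op_of_joined {X : Type*} [TopologicalSpace X] {op : X → X → X}
    (hcont : Continuous fun p : X × X => op p.1 p.2) (hidem : ∀ x : X, op x x = x)
    {a b : X} (hab : Joined a b) : Joined a (op a b) := by
  simpa [hidem] using hab.map (f := op a) (hcont.comp (continuous_const.prodMk continuous_id))

theorem H0_eq_freeAbelianGroup_zerothHomotopy_general {X : Type*} [TopologicalSpace X]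
    (op : X → X → X)
    (hcont : Continuous fun p : X × X => op p.1 p.2)
    (hidem : ∀ x : X, op x x = x)
    (hind : ∀ x y : X, Joined x y →
      Relation.EqvGen (fun a b : X => ∃ c : X, Joined a c ∧ b = op a c) x y) :
    Nonempty ((FreeAbelianGroup X ⧸ AddSubgroup.closure
      {z : FreeAbelianGroup X | ∃ a b : X, Joined a b ∧
        z = FreeAbelianGroup.of a - FreeAbelianGroup.of (op a b)}) ≃+
      FreeAbelianGroup (ZerothHomotopy X)) := by
  have hgen : {z : FreeAbelianGroup X | ∃ a b : X, Joined a b ∧ z = of a - of (op a b)} =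
      {z | ∃ a b, (∃ c, Joined a c ∧ b = op a c) ∧ z = of a - of b} := by
    ext
    simp
  rw [hgen]
  refine ⟨quotientRelSubgroupEquiv (pathSetoid X) ?_ hind⟩
  rintro a _ ⟨c, hac, rfl⟩
  exact joined_op_of_joined hcont hidem hac

/-- Let `X` be a topological space with a continuous quandle operation `op` (idempotent,
bijective right translations, right self-distributive). If every path component of `X` is
indecomposable (any two joined points are related by the equivalence relation generated by
`a ~ a ▷ c` for `c` joined to `a`), then the quotient of the free abelian group on `X` by
the subgroup generated by the elements `of a - of (a ▷ b)` over all pairs with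
`Joined a b` — which is `H₀(X)` — is isomorphic to the free abelian group on the set of
path components of `X`, i.e. `H₀(X) = ⊕_α ℤ_α`. -/
theorem H0_eq_freeAbelianGroup_zerothHomotopy {X : Type*} [TopologicalSpace X]
    (op : X → X → X)
    (hcont : Continuous fun p : X × X => op p.1 p.2)
    (hidem : ∀ x : X, op x x = x)
    (hbij : ∀ y : X, Function.Bijective fun x : X => op x y)
    (hdist : ∀ x y z : X, op (op x y) z = op (op x z) (op y z))
    (hind : ∀ x y : X, Joined x y →
      Relation.EqvGen (fun a b : X => ∃ c : X, Joined a c ∧ b = op a c) x y) :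
    Nonempty ((FreeAbelianGroup X ⧸ AddSubgroup.closure
      {z : FreeAbelianGroup X | ∃ a b : X, Joined a b ∧
        z = FreeAbelianGroup.of a - FreeAbelianGroup.of (op a b)}) ≃+
      FreeAbelianGroup (ZerothHomotopy X)) :=
  H0_eq_freeAbelianGroup_zerothHomotopy_general op hcont hidem hind
end

section
/- Let X = Fin 3 = {0, 1, 2} with the quandle operation ▷ given by: 0 ▷ j = 0 for all j; 1 ▷ 0 = 2, 1 ▷ 1 = 1, 1 ▷ 2 = 1; 2 ▷ 0 = 1, 2 ▷ 1 = 2, 2 ▷ 2 = 2, and equip X with the indiscrete topology (so every pair of points is joined by a path). Then the quotient of the free abelian group on X by the subgroup generated by all elements (of a) − (of (a ▷ b)), for a, b ∈ X, is a free abelian group of rank 2 (isomorphic as an additive group to ℤ × ℤ). -/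
/-!
`H₀` is the free abelian group on the classes of the equivalence relation generated by
`a ~ a ▷ b`: the quotient map `X → X/~` kills exactly the boundaries. For this table the
classes are `{0}` and `{1, 2}`, so `H₀ ≅ ℤ²`.
-/

/-- The quandle operation on `{0, 1, 2}` with table `M = [[0,0,0],[2,1,1],[1,2,2]]`
(rows give `i ▷ j`). -/
def tableQuandleOp : Fin 3 → Fin 3 → Fin 3 :=
  fun i j => ![![0, 0, 0], ![2, 1, 1], ![1, 2, 2]] i j

open FreeAbelianGroup

section Orbits

variable {X Y : Type*} (op : X → Y → X)

def StepRel (a c : X) : Prop := ∃ b, op a b = c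

def zerothBoundaries : AddSubgroup (FreeAbelianGroup X) :=
  AddSubgroup.closure {z | ∃ a b, z = of a - of (op a b)}

def quotientZerothBoundariesToFree :
    FreeAbelianGroup X ⧸ zerothBoundaries op →+ FreeAbelianGroup (Quot (StepRel op)) :=
  QuotientAddGroup.lift _ (map (Quot.mk _)) <| by
    rw [zerothBoundaries, AddSubgroup.closure_le]
    rintro _ ⟨a, b, rfl⟩
    rw [SetLike.mem_coe, AddMonoidHom.mem_ker, map_sub, map_of_apply, map_of_apply,
      Quot.sound (⟨b, rfl⟩ : StepRel op a (op a b)), sub_self]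

def freeToQuotientZerothBoundaries :
    FreeAbelianGroup (Quot (StepRel op)) →+ FreeAbelianGroup X ⧸ zerothBoundaries op :=
  lift <| Quot.lift (fun a => QuotientAddGroup.mk (of a)) <| by
    rintro a _ ⟨b, rfl⟩
    exact QuotientAddGroup.eq_iff_sub_mem.2 (AddSubgroup.subset_closure ⟨a, b, rfl⟩)

def quotientZerothBoundariesEquiv :
    FreeAbelianGroup X ⧸ zerothBoundaries op ≃+ FreeAbelianGroup (Quot (StepRel op)) :=
  AddMonoidHom.toAddEquiv (quotientZerothBoundariesToFree op) (freeToQuotientZerothBoundaries op)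
    (by
      refine QuotientAddGroup.addMonoidHom_ext _ (lift_ext _ _ fun a => ?_)
      simp [quotientZerothBoundariesToFree, freeToQuotientZerothBoundaries])
    (lift_ext _ _ <| Quot.ind fun a => by
      simp [quotientZerothBoundariesToFree, freeToQuotientZerothBoundaries])

end Orbits

noncomputable def freeAbelianGroupFinTwoEquiv : FreeAbelianGroup (Fin 2) ≃+ ℤ × ℤ :=
  equivFinsupp (Fin 2) |>.trans (Finsupp.linearEquivFunOnFinite ℤ ℤ (Fin 2)).toAddEquiv
    |>.trans (LinearEquiv.piFinTwo ℤ fun _ => ℤ).toAddEquiv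

def tableQuandleOrbitsEquiv : Quot (StepRel tableQuandleOp) ≃ Fin 2 where
  toFun := Quot.lift ![0, 1, 1] <| by
    rintro a _ ⟨b, rfl⟩
    fin_cases a <;> fin_cases b <;> rfl
  invFun := ![Quot.mk _ 0, Quot.mk _ 1]
  left_inv := Quot.ind fun a => by
    fin_cases a
    · rfl
    · rfl
    · exact Quot.sound ⟨0, rfl⟩ -- `1 ▷ 0 = 2`
  right_inv i := by fin_cases i <;> rfl

/-- For the 3-element quandle with operation table `M = [[0,0,0],[2,1,1],[1,2,2]]`
equipped with the indiscrete topology (so all pairs of points are joined by paths), the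
zeroth topological quandle homology group — the quotient of the free abelian group on
`Fin 3` by the subgroup generated by all elements `of a - of (a ▷ b)` — is free abelian
of rank 2, i.e. isomorphic to `ℤ × ℤ`. -/
theorem H0_table_quandle_indiscrete :
    Nonempty ((FreeAbelianGroup (Fin 3) ⧸ AddSubgroup.closure
      {z : FreeAbelianGroup (Fin 3) | ∃ a b : Fin 3,
        z = FreeAbelianGroup.of a - FreeAbelianGroup.of (tableQuandleOp a b)}) ≃+ ℤ × ℤ) :=
  ⟨(quotientZerothBoundariesEquiv tableQuandleOp).trans <|
    (equivOfEquiv tableQuandleOrbitsEquiv).trans freeAbelianGroupFinTwoEquiv⟩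
end
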